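/- arXiv:2209.06171 — 2 statements merged into one kernel-verified Lean document; each statement's English description precedes it below -/
import Mathlib

section
/- Let P = p1→p2→⋯→p_ℓ be a forward-induced directed path in an oriented graph D, let (F_1,…,F_ℓ) and (L_1,…,L_ℓ) be the partitions of N(P) by first and last attachment on P. If D is A⃗4-free, then for all 2 ≤ i < j ≤ ℓ−1 there is no arc from F_i^+ to F_j and no arc from L_i to L_j^-. -/
namespace DichiP4

variable {V : Type*}

/-- An oriented graph: an arc relation with no digons (hence also no loops). -/
def Oriented (A : V → V → Prop) : Prop := ∀ u v, A u v → ¬ A v u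

/-- Adjacency in the underlying (undirected) graph. -/
def Adj (A : V → V → Prop) (u v : V) : Prop := A u v ∨ A v u

/-- The neighborhood `N(v)` of a vertex in the underlying graph. -/
def nbr (A : V → V → Prop) (v : V) : Set V := {w | Adj A v w}

/-- `N(S)`: the neighborhood of a set of vertices. -/
def nbrSet (A : V → V → Prop) (S : Set V) : Set V := (⋃ v ∈ S, nbr A v) \ S

/-- `N[S]`: the closed neighborhood of a set of vertices. -/
def cnbrSet (A : V → V → Prop) (S : Set V) : Set V := ⋃ v ∈ S, insert v (nbr A v)

/-- A clique in the underlying graph (= the vertex set of a tournament). -/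
def IsClique (A : V → V → Prop) (K : Set V) : Prop :=
  ∀ u ∈ K, ∀ v ∈ K, u ≠ v → Adj A u v

/-- The clique number `ω(D)` of the underlying graph. -/
noncomputable def cliqueNum (A : V → V → Prop) : ℕ :=
  sSup {n | ∃ K : Set V, IsClique A K ∧ K.Finite ∧ K.ncard = n}

/-- The set `s` induces an acyclic subdigraph (no directed cycle within `s`). -/
def AcyclicOn (A : V → V → Prop) (s : Set V) : Prop :=
  ∀ v, ¬ Relation.TransGen (fun x y => x ∈ s ∧ y ∈ s ∧ A x y) v v

/-- The set `s` admits a dicoloring with `k` colors: every color class induces an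
acyclic subdigraph. -/
def DicolorableOn (A : V → V → Prop) (s : Set V) (k : ℕ) : Prop :=
  ∃ c : V → ℕ, (∀ v ∈ s, c v < k) ∧ ∀ i : ℕ, AcyclicOn A {v | v ∈ s ∧ c v = i}

/-- The dichromatic number `χ⃗(s)` of the subdigraph induced by `s`. -/
noncomputable def dichi (A : V → V → Prop) (s : Set V) : ℕ :=
  sInf {k | DicolorableOn A s k}

/-- `A` has an induced subdigraph isomorphic to `B`. -/
def HasInducedCopy {W : Type*} (A : V → V → Prop) (B : W → W → Prop) : Prop :=
  ∃ f : W → V, Function.Injective f ∧ ∀ x y : W, B x y ↔ A (f x) (f y)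

/-- `A` is `B`-free: no induced subdigraph of `A` is isomorphic to `B`. -/
def Free {W : Type*} (A : V → V → Prop) (B : W → W → Prop) : Prop :=
  ¬ HasInducedCopy A B

/-- `P⃗4`: the orientation of the path `0 – 1 – 2 – 3` with arcs `0→1, 1→2, 2→3`. -/
def P4vec : Fin 4 → Fin 4 → Prop := fun x y =>
  (x = 0 ∧ y = 1) ∨ (x = 1 ∧ y = 2) ∨ (x = 2 ∧ y = 3)

/-- `A⃗4`: the orientation of the path `0 – 1 – 2 – 3` with arcs `1→0, 1→2, 3→2`. -/
def A4vec : Fin 4 → Fin 4 → Prop := fun x y =>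
  (x = 1 ∧ y = 0) ∨ (x = 1 ∧ y = 2) ∨ (x = 3 ∧ y = 2)

/-- `Q⃗4`: the orientation of the path `0 – 1 – 2 – 3` with arcs `0→1, 2→1, 3→2`. -/
def Q4vec : Fin 4 → Fin 4 → Prop := fun x y =>
  (x = 0 ∧ y = 1) ∨ (x = 2 ∧ y = 1) ∨ (x = 3 ∧ y = 2)

/-- `Q⃗4'`: the orientation of the path `0 – 1 – 2 – 3` with arcs `1→0, 2→1, 2→3`. -/
def Q4'vec : Fin 4 → Fin 4 → Prop := fun x y =>
  (x = 1 ∧ y = 0) ∨ (x = 2 ∧ y = 1) ∨ (x = 2 ∧ y = 3)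

/-- `B` is an orientation of the path on four vertices `0 – 1 – 2 – 3`. -/
def IsP4Orientation (B : Fin 4 → Fin 4 → Prop) : Prop :=
  Oriented B ∧ ∀ x y : Fin 4, Adj B x y ↔ ((x : ℕ) + 1 = (y : ℕ) ∨ (y : ℕ) + 1 = (x : ℕ))

/-- `p 1 → p 2 → ⋯ → p ℓ` is a directed path in `A` (distinct vertices). -/
def IsDirPath (A : V → V → Prop) (ℓ : ℕ) (p : ℕ → V) : Prop :=
  1 ≤ ℓ ∧ Set.InjOn p (Set.Icc 1 ℓ) ∧ ∀ i, 1 ≤ i → i < ℓ → A (p i) (p (i + 1))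

/-- A directed path `p 1 → ⋯ → p ℓ` is forward-induced: no arc `(p i, p j)` with
`j > i + 1`. -/
def ForwardInduced (A : V → V → Prop) (ℓ : ℕ) (p : ℕ → V) : Prop :=
  ∀ i j, 1 ≤ i → j ≤ ℓ → i + 1 < j → ¬ A (p i) (p j)

/-- `p 1 → ⋯ → p ℓ` is a shortest directed path from `p 1` to `p ℓ`. -/
def IsShortestDirPath (A : V → V → Prop) (ℓ : ℕ) (p : ℕ → V) : Prop :=
  IsDirPath A ℓ p ∧
    ∀ (m : ℕ) (q : ℕ → V), IsDirPath A m q → q 1 = p 1 → q m = p ℓ → ℓ ≤ m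

/-- The vertex set `V(P)` of the path `p 1, …, p ℓ`. -/
def pathSet (ℓ : ℕ) (p : ℕ → V) : Set V := p '' Set.Icc 1 ℓ

/-- `N(P)`: the neighborhood of the vertex set of the path. -/
def pathNbrs (A : V → V → Prop) (ℓ : ℕ) (p : ℕ → V) : Set V := nbrSet A (pathSet ℓ p)

/-- `F i`: vertices of `N(P)` whose first neighbor on the path is `p i`. -/
def Fatt (A : V → V → Prop) (ℓ : ℕ) (p : ℕ → V) (i : ℕ) : Set V :=
  {v ∈ pathNbrs A ℓ p | Adj A v (p i) ∧ ∀ i', 1 ≤ i' → i' < i → ¬ Adj A v (p i')}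

/-- `L j`: vertices of `N(P)` whose last neighbor on the path is `p j`. -/
def Latt (A : V → V → Prop) (ℓ : ℕ) (p : ℕ → V) (j : ℕ) : Set V :=
  {v ∈ pathNbrs A ℓ p | Adj A v (p j) ∧ ∀ j', j < j' → j' ≤ ℓ → ¬ Adj A v (p j')}

/-- `F i ⁺`: in-neighbors of `p i` in `F i`. -/
def FattP (A : V → V → Prop) (ℓ : ℕ) (p : ℕ → V) (i : ℕ) : Set V :=
  {v ∈ Fatt A ℓ p i | A v (p i)}

/-- `F i ⁻`: out-neighbors of `p i` in `F i`. -/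
def FattM (A : V → V → Prop) (ℓ : ℕ) (p : ℕ → V) (i : ℕ) : Set V :=
  {v ∈ Fatt A ℓ p i | A (p i) v}

/-- `L j ⁺`: in-neighbors of `p j` in `L j`. -/
def LattP (A : V → V → Prop) (ℓ : ℕ) (p : ℕ → V) (j : ℕ) : Set V :=
  {v ∈ Latt A ℓ p j | A v (p j)}

/-- `L j ⁻`: out-neighbors of `p j` in `L j`. -/
def LattM (A : V → V → Prop) (ℓ : ℕ) (p : ℕ → V) (j : ℕ) : Set V :=
  {v ∈ Latt A ℓ p j | A (p j) v}

/-- `W^p = (F₂⁻ ∪ ⋯ ∪ F_{ℓ-1}⁻) ∪ (L₂⁺ ∪ ⋯ ∪ L_{ℓ-1}⁺)`. -/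
def Wp (A : V → V → Prop) (ℓ : ℕ) (p : ℕ → V) : Set V :=
  (⋃ i ∈ Set.Icc 2 (ℓ - 1), FattM A ℓ p i) ∪ ⋃ i ∈ Set.Icc 2 (ℓ - 1), LattP A ℓ p i

/-- `W^a = (F₂⁺ ∪ ⋯ ∪ F_{ℓ-1}⁺) ∪ (L₂⁻ ∪ ⋯ ∪ L_{ℓ-1}⁻)`. -/
def Wa (A : V → V → Prop) (ℓ : ℕ) (p : ℕ → V) : Set V :=
  (⋃ i ∈ Set.Icc 2 (ℓ - 1), FattP A ℓ p i) ∪ ⋃ i ∈ Set.Icc 2 (ℓ - 1), LattM A ℓ p i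

/-- `R^p = N(P) \ (N({p1, p2, pℓ}) ∪ W^p)`. -/
def Rp (A : V → V → Prop) (ℓ : ℕ) (p : ℕ → V) : Set V :=
  pathNbrs A ℓ p \ (nbrSet A {p 1, p 2, p ℓ} ∪ Wp A ℓ p)

/-- `R^a = N(P) \ (N({p1, pℓ}) ∪ W^a)`. -/
def Ra (A : V → V → Prop) (ℓ : ℕ) (p : ℕ → V) : Set V :=
  pathNbrs A ℓ p \ (nbrSet A {p 1, p ℓ} ∪ Wa A ℓ p)

/-- A dipolar set: a nonempty set `S` partitioned into `S⁺` (no out-neighbor outside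
`S`) and `S⁻` (no in-neighbor outside `S`). -/
def IsDipolar (A : V → V → Prop) (S : Set V) : Prop :=
  S.Nonempty ∧ ∃ Sp Sm : Set V, Sp ∪ Sm = S ∧ Disjoint Sp Sm ∧
    (∀ v ∈ Sp, ∀ w, w ∉ S → ¬ A v w) ∧ ∀ v ∈ Sm, ∀ w, w ∉ S → ¬ A w v

/-- Reachability by a directed path staying inside `s`. -/
def ReachIn (A : V → V → Prop) (s : Set V) (u v : V) : Prop :=
  Relation.ReflTransGen (fun x y => x ∈ s ∧ y ∈ s ∧ A x y) u v

/-- A digraph is strongly connected. -/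
def StronglyConnected (A : V → V → Prop) : Prop :=
  ∀ u v : V, Relation.ReflTransGen A u v

/-- `t` is a strongly connected component of the subdigraph induced by `s`. -/
def IsSCCOf (A : V → V → Prop) (s t : Set V) : Prop :=
  t ⊆ s ∧ t.Nonempty ∧ (∀ u ∈ t, ∀ v ∈ t, ReachIn A s u v) ∧
    ∀ u ∈ t, ∀ v ∈ s, ReachIn A s u v → ReachIn A s v u → v ∈ t

/-- A source strongly connected component: all arcs between it and the rest of `s`
begin in it. -/
def IsSourceSCC (A : V → V → Prop) (s t : Set V) : Prop :=
  IsSCCOf A s t ∧ ∀ u ∈ s, ∀ v ∈ t, A u v → u ∈ t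

/-- A sink strongly connected component: all arcs between it and the rest of `s`
end in it. -/
def IsSinkSCC (A : V → V → Prop) (s t : Set V) : Prop :=
  IsSCCOf A s t ∧ ∀ u ∈ t, ∀ v ∈ s, A u v → v ∈ t

/-- `K` (a tournament of maximum order) and the directed path `p 1 → ⋯ → p ℓ`
(from a source SCC of `D[K]` to a sink SCC of `D[K]`) form a closed tournament
`C = K ∪ V(P)`. -/
def FormsClosedTournament (A : V → V → Prop) (K : Set V) (ℓ : ℕ) (p : ℕ → V) : Prop :=
  IsClique A K ∧ K.Finite ∧ K.ncard = cliqueNum A ∧ IsDirPath A ℓ p ∧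
    (∃ t, IsSourceSCC A K t ∧ p 1 ∈ t) ∧ ∃ t, IsSinkSCC A K t ∧ p ℓ ∈ t

/-- `K` and `P` form a path-minimizing closed tournament: `|P|` is minimum among
all pairs forming a closed tournament. -/
def FormsPathMinClosedTournament (A : V → V → Prop) (K : Set V) (ℓ : ℕ) (p : ℕ → V) :
    Prop :=
  FormsClosedTournament A K ℓ p ∧
    ∀ (K' : Set V) (ℓ' : ℕ) (p' : ℕ → V), FormsClosedTournament A K' ℓ' p' → ℓ ≤ ℓ'

/-- The strong neighborhood of `S`: neighbors of `S` having both an in-neighbor and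
an out-neighbor in `S`. -/
def strongNbrs (A : V → V → Prop) (S : Set V) : Set V :=
  {v ∈ nbrSet A S | (∃ u ∈ S, A u v) ∧ ∃ u ∈ S, A v u}

/-! An arc `v → w` with `v ∈ F_i⁺`, `w ∈ F_j` closes the induced `A⃗4` on `w ← v → p_i ← p_{i-1}`:
`w` sees neither `p_{i-1}` nor `p_i`, its first neighbour being `p_j`, and `v` does not see
`p_{i-1}`. Symmetrically, an arc `v → w` with `v ∈ L_i`, `w ∈ L_j⁻` gives the induced `A⃗4`
on `p_{j+1} ← p_j → w ← v`. -/

theorem adj_comm {A : V → V → Prop} {u v : V} : Adj A u v ↔ Adj A v u := Or.comm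

theorem hasInducedCopy_A4vec {A : V → V → Prop} (hA : Oriented A) {a b c d : V}
    (hba : A b a) (hbc : A b c) (hdc : A d c)
    (nac : ¬ Adj A a c) (nad : ¬ Adj A a d) (nbd : ¬ Adj A b d)
    (hac : a ≠ c) (had : a ≠ d) (hbd : b ≠ d) : HasInducedCopy A A4vec := by
  have irrefl : ∀ x, ¬ A x x := fun x h => hA x x h h
  have hab : a ≠ b := by rintro rfl; exact irrefl a hba
  have hbc' : b ≠ c := by rintro rfl; exact irrefl b hbc
  have hcd : c ≠ d := by rintro rfl; exact irrefl c hdc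
  have nab : ¬ A a b := hA _ _ hba
  have ncb : ¬ A c b := hA _ _ hbc
  have ncd : ¬ A c d := hA _ _ hdc
  simp only [Adj, not_or] at nac nad nbd
  refine ⟨![a, b, c, d], ?_, ?_⟩
  · intro x y hxy
    fin_cases x <;> fin_cases y <;> simp_all [eq_comm]
  · intro x y
    fin_cases x <;> fin_cases y <;> simp_all [A4vec]

theorem ne_of_mem_pathNbrs {A : V → V → Prop} {ℓ k : ℕ} {p : ℕ → V} {v : V}
    (hv : v ∈ pathNbrs A ℓ p) (hk : 1 ≤ k) (hkℓ : k ≤ ℓ) : v ≠ p k := by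
  rintro rfl
  exact hv.2 ⟨k, ⟨hk, hkℓ⟩, rfl⟩

section ForbiddenArcs

variable {A : V → V → Prop} {ℓ : ℕ} {p : ℕ → V} {i j : ℕ}

theorem not_arc_FattP_Fatt (hA : Oriented A) (hfree : Free A A4vec) (hp : IsDirPath A ℓ p)
    (h2i : 2 ≤ i) (hij : i < j) (hiℓ : i ≤ ℓ) :
    ∀ v ∈ FattP A ℓ p i, ∀ w ∈ Fatt A ℓ p j, ¬ A v w := by
  obtain ⟨k, rfl⟩ : ∃ k, i = k + 1 := ⟨i - 1, by omega⟩
  rintro v ⟨⟨hvN, -, hv_first⟩, hv_in⟩ w ⟨hwN, -, hw_first⟩ hvw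
  exact hfree <| hasInducedCopy_A4vec hA hvw hv_in (hp.2.2 k (by omega) (by omega))
    (hw_first _ (by omega) hij) (hw_first k (by omega) (by omega))
    (hv_first k (by omega) (by omega))
    (ne_of_mem_pathNbrs hwN (by omega) hiℓ) (ne_of_mem_pathNbrs hwN (by omega) (by omega))
    (ne_of_mem_pathNbrs hvN (by omega) (by omega))

theorem not_arc_Latt_LattM (hA : Oriented A) (hfree : Free A A4vec) (hp : IsDirPath A ℓ p)
    (hij : i < j) (hjℓ : j < ℓ) :
    ∀ v ∈ Latt A ℓ p i, ∀ w ∈ LattM A ℓ p j, ¬ A v w := by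
  rintro v ⟨hvN, -, hv_last⟩ w ⟨⟨hwN, -, hw_last⟩, hw_out⟩ hvw
  exact hfree <| hasInducedCopy_A4vec hA (hp.2.2 j (by omega) hjℓ) hw_out hvw
    (adj_comm.not.mp (hw_last _ (by omega) hjℓ)) (adj_comm.not.mp (hv_last _ (by omega) hjℓ))
    (adj_comm.not.mp (hv_last j hij hjℓ.le))
    (ne_of_mem_pathNbrs hwN (by omega) hjℓ).symm (ne_of_mem_pathNbrs hvN (by omega) hjℓ).symm
    (ne_of_mem_pathNbrs hvN (by omega) hjℓ.le).symm

end ForbiddenArcs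

theorem A4free_forbidden_arcs_general {V : Type*}
    (A : V → V → Prop) (hA : Oriented A) (hfree : Free A A4vec)
    (ℓ : ℕ) (p : ℕ → V) (hp : IsDirPath A ℓ p)
    (i j : ℕ) (h2i : 2 ≤ i) (hij : i < j) (hj : j ≤ ℓ - 1) :
    (∀ v ∈ FattP A ℓ p i, ∀ w ∈ Fatt A ℓ p j, ¬ A v w) ∧
      ∀ v ∈ Latt A ℓ p i, ∀ w ∈ LattM A ℓ p j, ¬ A v w :=
  ⟨not_arc_FattP_Fatt hA hfree hp h2i hij (by omega),
    not_arc_Latt_LattM hA hfree hp hij (by omega)⟩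

/-- in an `A⃗4`-free oriented graph, for a forward-induced directed
path `p 1 → ⋯ → p ℓ` and `2 ≤ i < j ≤ ℓ - 1`, there is no arc from `F i ⁺` to
`F j` and no arc from `L i` to `L j ⁻`. -/
theorem A4free_forbidden_arcs {V : Type*}
    (A : V → V → Prop) (hA : Oriented A) (hfree : Free A A4vec)
    (ℓ : ℕ) (p : ℕ → V) (hp : IsDirPath A ℓ p) (hfi : ForwardInduced A ℓ p)
    (i j : ℕ) (h2i : 2 ≤ i) (hij : i < j) (hj : j ≤ ℓ - 1) :
    (∀ v ∈ FattP A ℓ p i, ∀ w ∈ Fatt A ℓ p j, ¬ A v w) ∧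
      ∀ v ∈ Latt A ℓ p i, ∀ w ∈ LattM A ℓ p j, ¬ A v w :=
  A4free_forbidden_arcs_general A hA hfree ℓ p hp i j h2i hij hj

end DichiP4
end

section
/- Let D be a P⃗4-free oriented graph, let P = p1→p2→⋯→p_ℓ be a forward-induced directed path in D, and let R^p be defined with respect to P. If v, w ∈ R^p and (w,v) ∈ E(D), then D contains a directed path from v to w on at most max{6, ℓ−1} vertices. -/
/-! Let `p i` be the first neighbour of `v` on `P` and `p j` the last neighbour of `w`.
Membership in `R^p` forces `3 ≤ i, j ≤ ℓ - 1` and the arcs `v → p i`, `p j → w`.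
If `i ≤ j`, follow `P` from `p i` to `p j`. If `i ≥ j + 2`, the walk `p j → w → v → p i` is not
an induced `P⃗4`, which forces the chord `p i → p j`. If `i = j + 1`, the segment
`p (j-1) → ⋯ → p (j+2)` of the forward-induced path is not an induced `P⃗4` either, and each of
its possible backward arcs closes a walk from `v` to `w` on at most six vertices.
Walks are finally shortened to paths. -/

namespace DichiP4

variable {V : Type*}

theorem _root_.List.IsChain.exists_nodup {α : Type*} {R : α → α → Prop} {l : List α}
    (hl : l.IsChain R) :
    ∃ l' : List α, l'.Nodup ∧ l'.IsChain R ∧ l'.head? = l.head? ∧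
      l'.getLast? = l.getLast? ∧ l'.length ≤ l.length := by
  induction l with
  | nil => exact ⟨[], List.nodup_nil, .nil, rfl, rfl, le_rfl⟩
  | cons a t ih =>
    obtain ⟨l', hnd, hc, hhead, hlast, hlen⟩ := ih hl.tail
    by_cases ha : a ∈ l'
    · obtain ⟨s, r, rfl⟩ := List.append_of_mem ha
      refine ⟨a :: r, hnd.sublist (List.sublist_append_right _ _),
        hc.suffix (List.suffix_append _ _), rfl, ?_, ?_⟩
      · rw [List.getLast?_cons, List.getLast?_cons, ← hlast]
        simp [List.getLast?_append, List.getLast?_cons]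
      · simp only [List.length_append, List.length_cons] at hlen ⊢
        omega
    · refine ⟨a :: l', List.nodup_cons.2 ⟨ha, hnd⟩,
        List.isChain_cons.2 ⟨hhead ▸ (List.isChain_cons.1 hl).1, hc⟩, rfl, ?_, ?_⟩
      · simp [List.getLast?_cons, hlast]
      · simpa using hlen

theorem isDirPath_getD_of_nodup {A : V → V → Prop} {l : List V} (d : V) (hnd : l.Nodup)
    (hc : l.IsChain A) (hne : l ≠ []) : IsDirPath A l.length (fun k => l.getD (k - 1) d) := by
  refine ⟨List.length_pos_iff.2 hne, fun a ha b hb hab => ?_, fun k hk hkl => ?_⟩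
  · obtain ⟨ha1, ha2⟩ := ha
    obtain ⟨hb1, hb2⟩ := hb
    simp only [List.getD_eq_getElem _ _ (by omega : a - 1 < l.length),
      List.getD_eq_getElem _ _ (by omega : b - 1 < l.length), hnd.getElem_inj_iff] at hab
    omega
  · simp only [List.getD_eq_getElem _ _ (by omega : k - 1 < l.length),
      List.getD_eq_getElem _ _ (by omega : k + 1 - 1 < l.length)]
    convert hc.getElem (k - 1) (by omega) using 2
    omega

theorem exists_isDirPath_of_isChain {A : V → V → Prop} {l : List V} {u v : V}
    (hc : l.IsChain A) (hu : l.head? = some u) (hv : l.getLast? = some v) :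
    ∃ m q, IsDirPath A m q ∧ q 1 = u ∧ q m = v ∧ m ≤ l.length := by
  obtain ⟨l', hnd, hc', hu', hv', hlen⟩ := hc.exists_nodup
  have hne : l' ≠ [] := by rintro rfl; simp at hu'; simp [← hu'] at hu
  refine ⟨l'.length, _, isDirPath_getD_of_nodup u hnd hc' hne, ?_, ?_, hlen⟩
  · simp [List.getD_eq_getElem?_getD, ← List.head?_eq_getElem?, hu', hu]
  · simp [List.getD_eq_getElem?_getD, ← List.getLast?_eq_getElem?, hv', hv]

section Path

variable {A : V → V → Prop} {ℓ : ℕ} {p : ℕ → V} {x : V} {k : ℕ}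

theorem adj_comm_s14 {a b : V} : Adj A a b ↔ Adj A b a := Or.comm

theorem mem_pathSet (h1 : 1 ≤ k) (h2 : k ≤ ℓ) : p k ∈ pathSet ℓ p := ⟨k, ⟨h1, h2⟩, rfl⟩

theorem ne_of_mem_pathNbrs_s14 (hx : x ∈ pathNbrs A ℓ p) (h1 : 1 ≤ k) (h2 : k ≤ ℓ) : x ≠ p k :=
  fun h => hx.2 (h ▸ mem_pathSet h1 h2)

theorem exists_adj_of_mem_pathNbrs (hx : x ∈ pathNbrs A ℓ p) :
    ∃ k, 1 ≤ k ∧ k ≤ ℓ ∧ Adj A x (p k) := by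
  obtain ⟨_, ⟨k, ⟨h1, h2⟩, rfl⟩, hadj⟩ := Set.mem_iUnion₂.1 hx.1
  exact ⟨k, h1, h2, adj_comm_s14.1 hadj⟩

theorem eq_of_mem_Rp_of_adj (hℓ : 1 ≤ ℓ) (hx : x ∈ Rp A ℓ p) (hk : k = 1 ∨ k = 2 ∨ k = ℓ)
    (hadj : Adj A x (p k)) : x = p 2 := by
  have hS : x ∈ ({p 1, p 2, p ℓ} : Set V) := by
    by_contra hS
    refine hx.2 (Or.inl ⟨Set.mem_iUnion₂.2 ⟨p k, ?_, adj_comm_s14.1 hadj⟩, hS⟩)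
    rcases hk with rfl | rfl | rfl <;> simp
  rcases hS with h | h | h
  · exact absurd h (ne_of_mem_pathNbrs_s14 hx.1 le_rfl hℓ)
  · exact h
  · exact absurd h (ne_of_mem_pathNbrs_s14 hx.1 hℓ le_rfl)

theorem Rp_subsingleton (hℓ : ℓ = 1) : (Rp A ℓ p).Subsingleton := by
  have hRp : ∀ y ∈ Rp A ℓ p, y = p 2 := fun y hy => by
    obtain ⟨k, hk1, hkℓ, hadj⟩ := exists_adj_of_mem_pathNbrs hy.1
    exact eq_of_mem_Rp_of_adj hℓ.ge hy (by omega) hadj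
  exact fun y hy z hz => (hRp y hy).trans (hRp z hz).symm

theorem not_adj_of_mem_Rp (hℓ : 2 ≤ ℓ) (hx : x ∈ Rp A ℓ p) (hk : k = 1 ∨ k = 2 ∨ k = ℓ) :
    ¬ Adj A x (p k) := fun hadj =>
  ne_of_mem_pathNbrs_s14 hx.1 one_le_two hℓ (eq_of_mem_Rp_of_adj (by omega) hx hk hadj)

theorem exists_first_arc_of_mem_Rp (hℓ : 2 ≤ ℓ) (hx : x ∈ Rp A ℓ p) :
    ∃ i, 3 ≤ i ∧ i < ℓ ∧ A x (p i) ∧ ∀ k, 1 ≤ k → k < i → ¬ Adj A x (p k) := by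
  classical
  have h := exists_adj_of_mem_pathNbrs hx.1
  obtain ⟨hi1, hiℓ, hadj⟩ := Nat.find_spec h
  have hfirst : ∀ k, 1 ≤ k → k < Nat.find h → ¬ Adj A x (p k) := fun k hk1 hk hadj =>
    Nat.find_min h hk ⟨hk1, by omega, hadj⟩
  have hi : ¬ (Nat.find h = 1 ∨ Nat.find h = 2 ∨ Nat.find h = ℓ) := fun hk =>
    not_adj_of_mem_Rp hℓ hx hk hadj
  have hout : ¬ A (p (Nat.find h)) x := fun hout =>
    hx.2 (Or.inr (Or.inl (Set.mem_iUnion₂.2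
      ⟨Nat.find h, ⟨by omega, by omega⟩, ⟨hx.1, hadj, hfirst⟩, hout⟩)))
  exact ⟨Nat.find h, by omega, by omega, hadj.resolve_right hout, hfirst⟩

theorem exists_last_arc_of_mem_Rp (hℓ : 2 ≤ ℓ) (hx : x ∈ Rp A ℓ p) :
    ∃ j, 3 ≤ j ∧ j < ℓ ∧ A (p j) x ∧ ∀ k, j < k → k ≤ ℓ → ¬ Adj A x (p k) := by
  classical
  obtain ⟨k₀, hk₀, hk₀ℓ, hk₀adj⟩ := exists_adj_of_mem_pathNbrs hx.1
  set P : ℕ → Prop := fun k => Adj A x (p k)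
  set j := Nat.findGreatest P ℓ
  have hadj : Adj A x (p j) := Nat.findGreatest_spec (P := P) hk₀ℓ hk₀adj
  have hk₀j : k₀ ≤ j := Nat.le_findGreatest (P := P) hk₀ℓ hk₀adj
  have hjℓ : j ≤ ℓ := Nat.findGreatest_le ℓ
  have hlast : ∀ k, j < k → k ≤ ℓ → ¬ Adj A x (p k) := fun k hk hkℓ =>
    Nat.findGreatest_is_greatest (P := P) hk hkℓ
  have hj : ¬ (j = 1 ∨ j = 2 ∨ j = ℓ) := fun hk => not_adj_of_mem_Rp hℓ hx hk hadj
  have hin : ¬ A x (p j) := fun hin =>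
    hx.2 (Or.inr (Or.inr (Set.mem_iUnion₂.2
      ⟨j, ⟨by omega, by omega⟩, ⟨hx.1, hadj, hlast⟩, hin⟩)))
  exact ⟨j, by omega, by omega, hadj.resolve_left hin, hlast⟩

end Path

section P4Free

variable {A : V → V → Prop} {ℓ : ℕ} {p : ℕ → V}

theorem adj_of_free_P4vec (hA : Oriented A) (hfree : Free A P4vec) {a b c d : V}
    (hab : A a b) (hbc : A b c) (hcd : A c d) (hac : ¬ Adj A a c) (hbd : ¬ Adj A b d) :
    Adj A a d := by
  by_contra had
  have irr : ∀ x, ¬ A x x := fun x h => hA x x h h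
  simp only [Adj, not_or] at hac hbd had
  have nab : a ≠ b := by rintro rfl; exact irr a hab
  have nbc : b ≠ c := by rintro rfl; exact irr b hbc
  have ncd : c ≠ d := by rintro rfl; exact irr c hcd
  have nac : a ≠ c := by rintro rfl; exact hA _ _ hab hbc
  have nbd : b ≠ d := by rintro rfl; exact hA _ _ hbc hcd
  have nad : a ≠ d := by rintro rfl; exact hac.2 hcd
  have hba := hA _ _ hab
  have hcb := hA _ _ hbc
  have hdc := hA _ _ hcd
  refine hfree ⟨![a, b, c, d], fun x y h => ?_, fun x y => ?_⟩
  · fin_cases x <;> fin_cases y <;> simp_all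
  · fin_cases x <;> fin_cases y <;> simp_all [P4vec, Fin.ext_iff]

theorem ForwardInduced.back_arc_of_free (hA : Oriented A) (hfree : Free A P4vec)
    (hp : IsDirPath A ℓ p) (hfi : ForwardInduced A ℓ p) {k : ℕ} (hk : 1 ≤ k) (hkℓ : k + 3 ≤ ℓ) :
    A (p (k + 2)) (p k) ∨ A (p (k + 3)) (p (k + 1)) ∨ A (p (k + 3)) (p k) := by
  by_contra! h
  have hchord := adj_of_free_P4vec hA hfree (hp.2.2 k hk (by omega))
    (hp.2.2 (k + 1) (by omega) (by omega)) (hp.2.2 (k + 2) (by omega) (by omega))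
    (not_or.2 ⟨hfi k (k + 2) hk (by omega) (by omega), h.1⟩)
    (not_or.2 ⟨hfi (k + 1) (k + 3) (by omega) hkℓ (by omega), h.2.1⟩)
  exact hchord.elim (hfi k (k + 3) hk hkℓ (by omega)) h.2.2

end P4Free

section Walk

variable {A : V → V → Prop} {ℓ : ℕ} {p : ℕ → V}

theorem IsDirPath.exists_walk (hp : IsDirPath A ℓ p) {i j : ℕ} (hi : 1 ≤ i) (hij : i ≤ j)
    (hjℓ : j ≤ ℓ) :
    ∃ l : List V, l.IsChain A ∧ l.head? = some (p i) ∧ l.getLast? = some (p j) ∧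
      l.length = j + 1 - i := by
  induction j, hij using Nat.le_induction with
  | base => exact ⟨[p i], .singleton _, rfl, rfl, by simp⟩
  | succ j hij ih =>
    obtain ⟨l, hc, hhead, hlast, hlen⟩ := ih (by omega)
    refine ⟨l ++ [p (j + 1)], hc.append (.singleton _) ?_, by simp [hhead], by simp, ?_⟩
    · simpa [hlast] using hp.2.2 j (by omega) (by omega)
    · simp only [List.length_append, List.length_singleton, hlen]
      omega

theorem exists_short_walk_of_mem_Rp (hA : Oriented A) (hfree : Free A P4vec)
    (hp : IsDirPath A ℓ p) (hfi : ForwardInduced A ℓ p) (hℓ : 2 ≤ ℓ) {v w : V}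
    (hv : v ∈ Rp A ℓ p) (hw : w ∈ Rp A ℓ p) (harc : A w v) :
    ∃ l : List V, l.IsChain A ∧ l.head? = some v ∧ l.getLast? = some w ∧
      l.length ≤ max 6 (ℓ - 1) := by
  obtain ⟨i, hi, hiℓ, hvi, hvfirst⟩ := exists_first_arc_of_mem_Rp hℓ hv
  obtain ⟨j, hj, hjℓ, hjw, hwlast⟩ := exists_last_arc_of_mem_Rp hℓ hw
  rcases le_or_gt i j with hij | hji
  · obtain ⟨l, hc, hhead, hlast, hlen⟩ := hp.exists_walk (by omega) hij hjℓ.le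
    refine ⟨v :: (l ++ [w]), ?_, rfl, by simp [List.getLast?_cons], ?_⟩
    · exact (hc.append (.singleton _) (by simpa [hlast] using hjw)).cons
        (by simpa [hhead] using hvi)
    · simp only [List.length_cons, List.length_append, List.length_nil, hlen]
      omega
  rcases Nat.lt_or_eq_of_le hji with hji | rfl
  · have hji' : A (p i) (p j) :=
      (adj_of_free_P4vec hA hfree hjw harc hvi
        (fun h => hvfirst j (by omega) (by omega) (adj_comm_s14.1 h))
        (hwlast i (by omega) hiℓ.le)).resolve_left (hfi j i (by omega) hiℓ.le hji)
    exact ⟨[v, p i, p j, w], by simp [hvi, hji', hjw], rfl, rfl, by simp⟩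
  · obtain ⟨k, rfl⟩ : ∃ k, j = k + 1 := ⟨j - 1, by omega⟩
    have hk := hp.2.2 k (by omega) (by omega)
    have hk₂ := hp.2.2 (k + 2) (by omega) (by omega)
    rcases hfi.back_arc_of_free hA hfree hp (k := k) (by omega) (by omega) with h | h | h
    · exact ⟨[v, p (k + 2), p k, p (k + 1), w], by simp [hvi, h, hk, hjw], rfl, rfl, by simp⟩
    · exact ⟨[v, p (k + 2), p (k + 3), p (k + 1), w], by simp [hvi, hk₂, h, hjw], rfl, rfl,
        by simp⟩
    · exact ⟨[v, p (k + 2), p (k + 3), p k, p (k + 1), w], by simp [hvi, hk₂, h, hk, hjw], rfl,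
        rfl, by simp⟩

end Walk

/-- in a `P⃗4`-free oriented graph, if `v, w ∈ R^p` and `(w,v)` is an
arc, then there is a directed path from `v` to `w` on at most `max 6 (ℓ-1)`
vertices. -/
theorem P4free_Rp_short_path {V : Type*}
    (A : V → V → Prop) (hA : Oriented A) (hfree : Free A P4vec)
    (ℓ : ℕ) (p : ℕ → V) (hp : IsDirPath A ℓ p) (hfi : ForwardInduced A ℓ p)
    (v w : V) (hv : v ∈ Rp A ℓ p) (hw : w ∈ Rp A ℓ p) (harc : A w v) :
    ∃ (m : ℕ) (q : ℕ → V),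
      IsDirPath A m q ∧ q 1 = v ∧ q m = w ∧ m ≤ max 6 (ℓ - 1) := by
  rcases lt_or_ge ℓ 2 with hℓ | hℓ
  · have hvw : v = w := Rp_subsingleton (by have := hp.1; omega) hv hw
    exact absurd harc (hvw ▸ fun h => hA v v h h)
  obtain ⟨l, hc, hhead, hlast, hlen⟩ :=
    exists_short_walk_of_mem_Rp hA hfree hp hfi hℓ hv hw harc
  obtain ⟨m, q, hq, hq1, hqm, hm⟩ := exists_isDirPath_of_isChain hc hhead hlast
  exact ⟨m, q, hq, hq1, hqm, hm.trans hlen⟩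

end DichiP4
end
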